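/- Multivariate integration by parts for independent complex Gaussian variables: let Z₁, …, Z_d be independent complex Gaussian random variables, Z_j with parameter ρ_j > 0, and let f : ℂ^d → ℂ be continuously differentiable (as a map ℝ^{2d} → ℝ²) with f and its derivative bounded. Then for each j, E[conj(Z_j) · f(Z₁,…,Z_d)] = ρ_j · E[(∂f/∂z_j)(Z₁,…,Z_d)], where ∂/∂z_j is the Wirtinger derivative in the j-th complex coordinate. -/

import Mathlib

/-!
The one-dimensional case is Stein's lemma `E[(X - μ) g(X)] = v E[g'(X)]` for `X ~ N(μ, v)`:
integrate by parts against the Gaussian density `φ`, which satisfies `φ' = -((x - μ)/v) φ`.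
Writing `Z = X + iY` with `X, Y` independent `N(0, ρ/2)` and `conj Z = X - iY`, Fubini and
Stein's lemma in each real coordinate give `E[conj Z · g(Z)] = (ρ/2) E[∂ₓg - i ∂ᵧg] = ρ E[∂g/∂z]`.
For `d` variables, `Z_j` is independent of the vector of the other coordinates, so the law of
the pair is a product and the one-variable formula applies to each slice `z ↦ f(…, z, …)`.
-/

open MeasureTheory ProbabilityTheory Complex Finset

/-- Law of a complex Gaussian variable with parameter `ρ`: the law of `Z = X + iY` where
`X, Y` are independent real centered Gaussian variables of mean `0` and variance `ρ/2`. -/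
noncomputable def complexGaussian (ρ : ℝ) : Measure ℂ :=
  ((gaussianReal 0 (ρ/2).toNNReal).prod (gaussianReal 0 (ρ/2).toNNReal)).map
    (fun p => (p.1 : ℂ) + (p.2 : ℂ) * Complex.I)


/-- Wirtinger derivative of `f : ℂ^d → ℂ` in the `j`-th complex coordinate:
`∂f/∂z_j = (1/2)(∂f/∂x_j − i ∂f/∂y_j)`. -/
noncomputable def wirtingerDerivPi {d : ℕ} (f : (Fin d → ℂ) → ℂ) (x : Fin d → ℂ)
    (j : Fin d) : ℂ :=
  (fderiv ℝ f x (Pi.single j 1) - Complex.I * fderiv ℝ f x (Pi.single j Complex.I)) / 2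

open scoped NNReal ComplexConjugate

section Stein

variable {E : Type*} [NormedAddCommGroup E] [NormedSpace ℝ E] {μ : ℝ} {v : ℝ≥0}

lemma integrable_gaussianReal_iff (hv : v ≠ 0) {f : ℝ → E} :
    Integrable f (gaussianReal μ v) ↔ Integrable (fun x => gaussianPDFReal μ v x • f x) := by
  rw [gaussianReal_of_var_ne_zero _ hv, integrable_withDensity_iff_integrable_smul'
    (measurable_gaussianPDF _ _) (ae_of_all _ fun _ => gaussianPDF_lt_top)]
  simp only [toReal_gaussianPDF]

lemma hasDerivAt_gaussianPDFReal (x : ℝ) :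
    HasDerivAt (gaussianPDFReal μ v) (-((x - μ) / v) * gaussianPDFReal μ v x) x := by
  have hsq : HasDerivAt (fun y => (y - μ) ^ 2) (2 * (x - μ)) x := by
    simpa using ((hasDerivAt_id x).sub_const μ).fun_pow 2
  have h := (hsq.fun_neg.div_const (2 * (v : ℝ))).exp.const_mul (√(2 * Real.pi * v))⁻¹
  rw [gaussianPDFReal_def]
  exact h.congr_deriv (by ring)

theorem integral_sub_smul_gaussianReal {g g' : ℝ → E} (hg : ∀ x, HasDerivAt g (g' x) x)
    (hg_int : Integrable g (gaussianReal μ v)) (hg'_int : Integrable g' (gaussianReal μ v))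
    (hxg_int : Integrable (fun x => (x - μ) • g x) (gaussianReal μ v)) :
    ∫ x, (x - μ) • g x ∂gaussianReal μ v = (v : ℝ) • ∫ x, g' x ∂gaussianReal μ v := by
  rcases eq_or_ne v 0 with rfl | hv
  · rw [gaussianReal_zero_var, integral_congr_ae (ae_eq_dirac _)]; simp
  rw [integrable_gaussianReal_iff hv] at hg_int hg'_int hxg_int
  rw [integral_gaussianReal_eq_integral_smul hv, integral_gaussianReal_eq_integral_smul hv]
  have hv' : (v : ℝ) ≠ 0 := by exact_mod_cast hv
  have key : ∀ x, (-((x - μ) / v) * gaussianPDFReal μ v x) • g x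
      = (-(v : ℝ)⁻¹) • (gaussianPDFReal μ v x • (x - μ) • g x) := fun x => by
    rw [smul_smul, smul_smul]; congr 1; ring
  have ibp := integral_bilinear_hasDerivAt_right_eq_neg_left_of_integrable
    (L := ContinuousLinearMap.lsmul ℝ ℝ) (fun x _ => hasDerivAt_gaussianPDFReal (μ := μ) (v := v) x)
    (fun x _ => hg x) hg'_int
    (by simp only [ContinuousLinearMap.lsmul_apply, key]; exact hxg_int.smul _) hg_int
  simp only [ContinuousLinearMap.lsmul_apply, key, integral_smul] at ibp
  rw [ibp, smul_neg, smul_smul, mul_neg, mul_inv_cancel₀ hv', neg_smul, neg_neg, one_smul]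

end Stein

section Product

variable {E : Type*} [NormedAddCommGroup E] [NormedSpace ℝ E] {v : ℝ≥0} {μ : Measure ℝ}
  [IsFiniteMeasure μ] {G : ℝ × ℝ → E} {C C' : ℝ}

theorem integral_fst_smul_gaussianReal_prod (hG : ContDiff ℝ 1 G) (hGC : ∀ p, ‖G p‖ ≤ C)
    (hG'C : ∀ p, ‖fderiv ℝ G p (1, 0)‖ ≤ C') :
    ∫ p, p.1 • G p ∂(gaussianReal 0 v).prod μ
      = (v : ℝ) • ∫ p, fderiv ℝ G p (1, 0) ∂(gaussianReal 0 v).prod μ := by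
  have hGc : Continuous G := hG.continuous
  have hG'c : Continuous fun p => fderiv ℝ G p (1, 0) :=
    (hG.continuous_fderiv one_ne_zero).clm_apply continuous_const
  have hid : Integrable (fun x : ℝ => x) (gaussianReal 0 v) :=
    (memLp_id_gaussianReal 1).integrable le_rfl
  have hint : Integrable (fun p : ℝ × ℝ => p.1 • G p) ((gaussianReal 0 v).prod μ) :=
    (hid.comp_fst μ).smul_bdd C hGc.aestronglyMeasurable (ae_of_all _ hGC)
  have hint' : Integrable (fun p => fderiv ℝ G p (1, 0)) ((gaussianReal 0 v).prod μ) :=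
    .of_bound hG'c.aestronglyMeasurable C' (ae_of_all _ hG'C)
  rw [integral_prod_symm _ hint, integral_prod_symm _ hint', ← integral_smul]
  refine integral_congr_ae (ae_of_all _ fun y => ?_)
  have hderiv : ∀ x, HasDerivAt (fun x => G (x, y)) (fderiv ℝ G (x, y) (1, 0)) x := fun x =>
    (hG.differentiable one_ne_zero (x, y)).hasFDerivAt.comp_hasDerivAt x
      ((hasDerivAt_id x).prodMk (hasDerivAt_const x y))
  have hGy : Continuous fun x => G (x, y) := hGc.comp (.prodMk_left y)
  have hG'y : Continuous fun x => fderiv ℝ G (x, y) (1, 0) := hG'c.comp (.prodMk_left y)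
  have hxGy : Integrable (fun x => (x - 0) • G (x, y)) (gaussianReal 0 v) := by
    simp only [sub_zero]
    exact hid.smul_bdd C hGy.aestronglyMeasurable (ae_of_all _ fun x => hGC _)
  simpa only [sub_zero] using integral_sub_smul_gaussianReal hderiv
    (.of_bound hGy.aestronglyMeasurable C (ae_of_all _ fun x => hGC _))
    (.of_bound hG'y.aestronglyMeasurable C' (ae_of_all _ fun x => hG'C _)) hxGy

theorem integral_snd_smul_prod_gaussianReal (hG : ContDiff ℝ 1 G) (hGC : ∀ p, ‖G p‖ ≤ C)
    (hG'C : ∀ p, ‖fderiv ℝ G p (0, 1)‖ ≤ C') :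
    ∫ p, p.2 • G p ∂μ.prod (gaussianReal 0 v)
      = (v : ℝ) • ∫ p, fderiv ℝ G p (0, 1) ∂μ.prod (gaussianReal 0 v) := by
  let σ := ContinuousLinearEquiv.prodComm ℝ ℝ ℝ
  have hσ : ∀ p, fderiv ℝ (G ∘ σ) p (1, 0) = fderiv ℝ G p.swap (0, 1) := fun p => by
    simp [σ, σ.comp_right_fderiv]
  have h := integral_fst_smul_gaussianReal_prod (v := v) (μ := μ) (G := G ∘ σ)
    (hG.comp σ.contDiff) (fun p => hGC _) (fun p => by simpa only [hσ] using hG'C _)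
  simp only [hσ] at h
  rw [← integral_prod_swap, ← integral_prod_swap (fun p => fderiv ℝ G p (0, 1))]
  simpa [σ] using h

end Product

section ComplexGaussian

variable {E : Type*} [NormedAddCommGroup E] [NormedSpace ℝ E] {ρ : ℝ} {g : ℂ → E} {C C' : ℝ}

lemma complexGaussian_eq_map (ρ : ℝ) :
    complexGaussian ρ = ((gaussianReal 0 (ρ / 2).toNNReal).prod
      (gaussianReal 0 (ρ / 2).toNNReal)).map equivRealProdCLM.symm := by
  simp only [complexGaussian]
  congr 1
  ext p
  exact (equivRealProdCLM_symm_apply p).symm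

instance isGaussian_complexGaussian (ρ : ℝ) : IsGaussian (complexGaussian ρ) := by
  rw [complexGaussian_eq_map]; infer_instance

lemma integral_complexGaussian (ρ : ℝ) (F : ℂ → E) :
    ∫ z, F z ∂complexGaussian ρ = ∫ p : ℝ × ℝ, F (p.1 + p.2 * I)
      ∂(gaussianReal 0 (ρ / 2).toNNReal).prod (gaussianReal 0 (ρ / 2).toNNReal) := by
  have he : MeasurableEmbedding equivRealProdCLM.symm :=
    equivRealProdCLM.symm.toHomeomorph.measurableEmbedding
  rw [complexGaussian_eq_map, he.integral_map]
  simp only [equivRealProdCLM_symm_apply]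

lemma fderiv_comp_equivRealProdCLM_symm_apply (g : ℂ → E) (p w : ℝ × ℝ) :
    fderiv ℝ (g ∘ equivRealProdCLM.symm) p w = fderiv ℝ g (p.1 + p.2 * I) (w.1 + w.2 * I) := by
  simp only [equivRealProdCLM.symm.comp_right_fderiv, ContinuousLinearMap.comp_apply,
    ContinuousLinearEquiv.coe_coe, equivRealProdCLM_symm_apply]

theorem integral_re_smul_complexGaussian (hρ : 0 ≤ ρ) (hg : ContDiff ℝ 1 g)
    (hgC : ∀ z, ‖g z‖ ≤ C) (hg'C : ∀ z, ‖fderiv ℝ g z‖ ≤ C') :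
    ∫ z, z.re • g z ∂complexGaussian ρ = (ρ / 2) • ∫ z, fderiv ℝ g z 1 ∂complexGaussian ρ := by
  have h := integral_fst_smul_gaussianReal_prod (v := (ρ / 2).toNNReal)
    (μ := gaussianReal 0 (ρ / 2).toNNReal) (hg.comp equivRealProdCLM.symm.contDiff)
    (fun p => hgC _) (fun p => by
      simpa [fderiv_comp_equivRealProdCLM_symm_apply] using
        (fderiv ℝ g _).le_of_opNorm_le (hg'C _) 1)
  rw [Real.coe_toNNReal _ (by positivity)] at h
  simpa [integral_complexGaussian, fderiv_comp_equivRealProdCLM_symm_apply,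
    equivRealProdCLM_symm_apply] using h

theorem integral_im_smul_complexGaussian (hρ : 0 ≤ ρ) (hg : ContDiff ℝ 1 g)
    (hgC : ∀ z, ‖g z‖ ≤ C) (hg'C : ∀ z, ‖fderiv ℝ g z‖ ≤ C') :
    ∫ z, z.im • g z ∂complexGaussian ρ = (ρ / 2) • ∫ z, fderiv ℝ g z I ∂complexGaussian ρ := by
  have h := integral_snd_smul_prod_gaussianReal (v := (ρ / 2).toNNReal)
    (μ := gaussianReal 0 (ρ / 2).toNNReal) (hg.comp equivRealProdCLM.symm.contDiff)
    (fun p => hgC _) (fun p => by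
      simpa [fderiv_comp_equivRealProdCLM_symm_apply] using
        (fderiv ℝ g _).le_of_opNorm_le (hg'C _) I)
  rw [Real.coe_toNNReal _ (by positivity)] at h
  simpa [integral_complexGaussian, fderiv_comp_equivRealProdCLM_symm_apply,
    equivRealProdCLM_symm_apply] using h

theorem integral_conj_mul_complexGaussian (hρ : 0 ≤ ρ) {g : ℂ → ℂ} (hg : ContDiff ℝ 1 g)
    (hgC : ∀ z, ‖g z‖ ≤ C) (hg'C : ∀ z, ‖fderiv ℝ g z‖ ≤ C') :
    ∫ z, conj z * g z ∂complexGaussian ρ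
      = ρ * ∫ z, (fderiv ℝ g z 1 - I * fderiv ℝ g z I) / 2 ∂complexGaussian ρ := by
  have hgc := hg.continuous
  have hg'c := hg.continuous_fderiv one_ne_zero
  have hid : Integrable id (complexGaussian ρ) := IsGaussian.integrable_id
  have hre : Integrable (fun z : ℂ => z.re • g z) (complexGaussian ρ) :=
    hid.re.smul_bdd C hgc.aestronglyMeasurable (ae_of_all _ hgC)
  have him : Integrable (fun z : ℂ => z.im • g z) (complexGaussian ρ) :=
    hid.im.smul_bdd C hgc.aestronglyMeasurable (ae_of_all _ hgC)
  have hD : ∀ w, Integrable (fun z => fderiv ℝ g z w) (complexGaussian ρ) := fun w =>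
    .of_bound (by fun_prop) (C' * ‖w‖)
      (ae_of_all _ fun z => (fderiv ℝ g z).le_of_opNorm_le (hg'C z) w)
  have hconj : ∀ z, conj z * g z = z.re • g z - I * z.im • g z := fun z => by
    have : conj z = z.re - z.im * I := by apply Complex.ext <;> simp
    rw [this, real_smul, real_smul]; ring
  simp only [hconj]
  rw [integral_sub hre (him.const_mul I), integral_const_mul,
    integral_re_smul_complexGaussian hρ hg hgC hg'C,
    integral_im_smul_complexGaussian hρ hg hgC hg'C,
    integral_div, integral_sub (hD 1) ((hD I).const_mul I), integral_const_mul]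
  simp only [real_smul]; push_cast; ring

end ComplexGaussian

section Independence

variable {Ω : Type*} [MeasurableSpace Ω] {P : Measure Ω}

theorem ProbabilityTheory.IndepFun.integral_comp_eq_integral_integral {α β E : Type*}
    [MeasurableSpace α] [MeasurableSpace β] [NormedAddCommGroup E] [NormedSpace ℝ E]
    [IsFiniteMeasure P] {X : Ω → α} {Y : Ω → β} (hXY : IndepFun X Y P) (hX : AEMeasurable X P)
    (hY : AEMeasurable Y P) {F : α × β → E} (hF : Integrable F ((P.map X).prod (P.map Y))) :
    ∫ ω, F (X ω, Y ω) ∂P = ∫ y, ∫ x, F (x, y) ∂P.map X ∂P.map Y := by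
  rw [← integral_prod_symm F hF]
  rw [← (indepFun_iff_map_prod_eq_prod_map_map hX hY).1 hXY] at hF ⊢
  exact (integral_map (hX.prodMk hY) hF.aestronglyMeasurable).symm

theorem ProbabilityTheory.iIndepFun.indepFun_update {ι β : Type*} [Fintype ι] [DecidableEq ι]
    [MeasurableSpace β] {X : ι → Ω → β} (h : iIndepFun X P) (hX : ∀ i, Measurable (X i))
    (j : ι) (c : β) :
    IndepFun (X j) (fun ω => Function.update (fun i => X i ω) j c) P := by
  let extend : (({j}ᶜ : Finset ι) → β) → ι → β := fun w i =>
    if hi : i = j then c else w ⟨i, by simpa using hi⟩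
  have hextend : Measurable extend := by
    refine measurable_pi_lambda _ fun i => ?_
    by_cases hi : i = j
    · simp only [extend, hi, dite_true, measurable_const]
    · simpa only [extend, hi, dite_false] using measurable_pi_apply _
  have := (h.indepFun_finset {j} {j}ᶜ disjoint_compl_right hX).comp
    (measurable_pi_apply ⟨j, mem_singleton_self j⟩) hextend
  convert this using 1
  · rfl
  funext ω i
  by_cases hi : i = j <;> simp [extend, hi]

end Independence

section Slices

variable {d : ℕ} {f : (Fin d → ℂ) → ℂ}

lemma norm_wirtingerDerivPi_le {x : Fin d → ℂ} {C : ℝ} (hC : ‖fderiv ℝ f x‖ ≤ C) (j : Fin d) :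
    ‖wirtingerDerivPi f x j‖ ≤ C := by
  have h : ∀ c : ℂ, ‖c‖ = 1 → ‖fderiv ℝ f x (Pi.single j c)‖ ≤ C := fun c hc => by
    simpa [Pi.norm_single, hc] using (fderiv ℝ f x).le_of_opNorm_le hC (Pi.single j c)
  calc ‖wirtingerDerivPi f x j‖
      ≤ (‖fderiv ℝ f x (Pi.single j 1)‖ + ‖fderiv ℝ f x (Pi.single j I)‖) / 2 := by
        rw [wirtingerDerivPi, norm_div, Complex.norm_two]
        gcongr
        exact (norm_sub_le _ _).trans (by simp)
    _ ≤ C := by linarith [h 1 norm_one, h I norm_I]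

lemma continuous_wirtingerDerivPi (hf : Continuous (fderiv ℝ f)) (j : Fin d) :
    Continuous fun x => wirtingerDerivPi f x j := by
  unfold wirtingerDerivPi; fun_prop

lemma fderiv_comp_update_apply (hf : Differentiable ℝ f) (w : Fin d → ℂ) (j : Fin d) (z c : ℂ) :
    fderiv ℝ (fun z => f (Function.update w j z)) z c
      = fderiv ℝ f (Function.update w j z) (Pi.single j c) := by
  rw [fderiv_fun_comp z (hf _) (hasFDerivAt_update w z).differentiableAt, fderiv_update]
  simp only [ContinuousLinearMap.comp_apply]
  congr 1
  ext i
  by_cases hi : i = j <;> simp [hi]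

theorem integral_conj_mul_comp_update_complexGaussian {ρ C C' : ℝ} (hρ : 0 ≤ ρ)
    (hf : ContDiff ℝ 1 f) (hfC : ∀ x, ‖f x‖ ≤ C) (hf'C : ∀ x, ‖fderiv ℝ f x‖ ≤ C')
    (w : Fin d → ℂ) (j : Fin d) :
    ∫ z, conj z * f (Function.update w j z) ∂complexGaussian ρ
      = ρ * ∫ z, wirtingerDerivPi f (Function.update w j z) j ∂complexGaussian ρ := by
  have hf' := hf.differentiable one_ne_zero
  have hbound : ∀ z, ‖fderiv ℝ (fun z => f (Function.update w j z)) z‖ ≤ C' := fun z =>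
    ContinuousLinearMap.opNorm_le_bound _ ((norm_nonneg _).trans (hf'C 0)) fun c => by
      simpa [fderiv_comp_update_apply hf', Pi.norm_single] using
        (fderiv ℝ f _).le_of_opNorm_le (hf'C _) (Pi.single j c)
  simpa [fderiv_comp_update_apply hf', wirtingerDerivPi] using
    integral_conj_mul_complexGaussian (g := fun z => f (Function.update w j z)) hρ
      (hf.comp (contDiff_update 1 w j)) (fun z => hfC _) hbound

lemma integrable_conj_mul_comp_update {ρ C : ℝ} (hf : Continuous f) (hfC : ∀ x, ‖f x‖ ≤ C)
    (ν : Measure (Fin d → ℂ)) [IsFiniteMeasure ν] (j : Fin d) :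
    Integrable (fun p : ℂ × (Fin d → ℂ) => conj p.1 * f (Function.update p.2 j p.1))
      ((complexGaussian ρ).prod ν) := by
  refine .mono' ((IsGaussian.integrable_id.norm.comp_fst ν).mul_const C) (by fun_prop)
    (ae_of_all _ fun p => ?_)
  rw [norm_mul, RCLike.norm_conj]
  exact mul_le_mul_of_nonneg_left (hfC _) (norm_nonneg _)

lemma integrable_wirtingerDerivPi_comp_update {C : ℝ} (hf : ContDiff ℝ 1 f)
    (hf'C : ∀ x, ‖fderiv ℝ f x‖ ≤ C) (μ : Measure (ℂ × (Fin d → ℂ))) [IsFiniteMeasure μ]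
    (j : Fin d) :
    Integrable (fun p : ℂ × (Fin d → ℂ) => wirtingerDerivPi f (Function.update p.2 j p.1) j) μ :=
  .of_bound (((continuous_wirtingerDerivPi (hf.continuous_fderiv one_ne_zero) j).comp
    (continuous_snd.update j continuous_fst)).aestronglyMeasurable) C
    (ae_of_all _ fun _ => norm_wirtingerDerivPi_le (hf'C _) j)

end Slices

/-- Multivariate integration by parts: for independent complex Gaussian variables
`Z₁, …, Z_d`, `Z_j` with parameter `ρ_j > 0`, and `f : ℂ^d → ℂ` continuously differentiable
with `f` and its derivative bounded,
`E[conj(Z_j)·f(Z₁,…,Z_d)] = ρ_j·E[(∂f/∂z_j)(Z₁,…,Z_d)]`. -/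
theorem complex_gaussian_multivariate_integration_by_parts
    {Ω : Type*} [MeasurableSpace Ω] (P : Measure Ω) [IsProbabilityMeasure P]
    (d : ℕ) (Z : Fin d → Ω → ℂ) (hZmeas : ∀ j, Measurable (Z j))
    (ρ : Fin d → ℝ) (hρ : ∀ j, 0 < ρ j)
    (hZ : ∀ j, Measure.map (Z j) P = complexGaussian (ρ j))
    (hindep : iIndepFun Z P)
    (f : (Fin d → ℂ) → ℂ) (hf : ContDiff ℝ 1 f) (C : ℝ)
    (hfb : ∀ x, ‖f x‖ ≤ C) (hfd : ∀ x, ‖fderiv ℝ f x‖ ≤ C) (j : Fin d) :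
    ∫ ω, (starRingEnd ℂ) (Z j ω) * f (fun i => Z i ω) ∂P
      = (ρ j : ℂ) * ∫ ω, wirtingerDerivPi f (fun i => Z i ω) j ∂P := by
  let R : Ω → Fin d → ℂ := fun ω => Function.update (fun i => Z i ω) j 0
  have hR : Measurable R := by fun_prop
  have hZR : IndepFun (Z j) R P := hindep.indepFun_update hZmeas j 0
  have hrecover (ω : Ω) : Function.update (R ω) j (Z j ω) = fun i => Z i ω := by simp [R]
  have hint₁ : Integrable (fun p : ℂ × (Fin d → ℂ) => conj p.1 * f (Function.update p.2 j p.1))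
      ((P.map (Z j)).prod (P.map R)) := by
    rw [hZ]; exact integrable_conj_mul_comp_update hf.continuous hfb _ j
  calc ∫ ω, conj (Z j ω) * f (fun i => Z i ω) ∂P
      = ∫ ω, conj (Z j ω) * f (Function.update (R ω) j (Z j ω)) ∂P := by simp only [hrecover]
    _ = ∫ w, ρ j * ∫ z, wirtingerDerivPi f (Function.update w j z) j ∂P.map (Z j) ∂P.map R := by
      rw [hZR.integral_comp_eq_integral_integral (hZmeas j).aemeasurable hR.aemeasurable hint₁, hZ]
      simp only [integral_conj_mul_comp_update_complexGaussian (hρ j).le hf hfb hfd]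
    _ = ρ j * ∫ ω, wirtingerDerivPi f (fun i => Z i ω) j ∂P := by
      rw [integral_const_mul, ← hZR.integral_comp_eq_integral_integral (hZmeas j).aemeasurable
        hR.aemeasurable (integrable_wirtingerDerivPi_comp_update hf hfd _ j)]
      simp only [hrecover]
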